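/- Suppose P ∈ 𝒫 with density p. Define the tilted density p̃(x) ∝ p(x) / (1 + ‖x‖₂²)^{1/2}, which is normalizable, and let P̃ be the associated probability distribution with score function b̃(x) = ∇ log p̃(x) = b(x) − x/(1 + ‖x‖₂²). Then b̃ is Lipschitz and P̃ is distantly dissipative; that is, P̃ ∈ 𝒫. -/

import Mathlib

open MeasureTheory Filter Real
open scoped BigOperators RealInnerProductSpace FourierTransform ENNReal

noncomputable section

/-- `E d` is the Euclidean space `ℝ^d`. -/
abbrev E (d : ℕ) : Type := EuclideanSpace ℝ (Fin d)

/-- The `j`-th standard basis vector of `ℝ^d`. -/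
def esingle (d : ℕ) (j : Fin d) : E d := EuclideanSpace.single j (1 : ℝ)

/-- Partial derivative in the `j`-th coordinate of the first argument of a bivariate kernel. -/
def Dx {d : ℕ} (j : Fin d) (k : E d → E d → ℝ) : E d → E d → ℝ :=
  fun x y => fderiv ℝ (fun z => k z y) x (esingle d j)

/-- Partial derivative in the `j`-th coordinate of the second argument of a bivariate kernel. -/
def Dy {d : ℕ} (j : Fin d) (k : E d → E d → ℝ) : E d → E d → ℝ :=
  fun x y => fderiv ℝ (fun z => k x z) y (esingle d j)

/-- A reproducing kernel Hilbert space of real-valued functions on `ℝ^d`, presented via its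
membership predicate, inner product and reproducing kernel. -/
structure RKHS' (d : ℕ) where
  mem : (E d → ℝ) → Prop
  inner : (E d → ℝ) → (E d → ℝ) → ℝ
  kernel : E d → E d → ℝ
  mem_zero : mem 0
  mem_add : ∀ f g, mem f → mem g → mem (f + g)
  mem_smul : ∀ (c : ℝ) f, mem f → mem (c • f)
  inner_symm : ∀ f g, inner f g = inner g f
  inner_add_left : ∀ f g h, inner (f + g) h = inner f h + inner g h
  inner_smul_left : ∀ (c : ℝ) f g, inner (c • f) g = c * inner f g
  inner_self_nonneg : ∀ f, 0 ≤ inner f f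
  inner_self_eq_zero : ∀ f, mem f → inner f f = 0 → f = 0
  kernel_mem : ∀ x, mem (kernel x)
  reproducing : ∀ f, mem f → ∀ x, f x = inner f (kernel x)

/-- The RKHS norm. -/
def RKHS'.norm {d : ℕ} (H : RKHS' d) (f : E d → ℝ) : ℝ := Real.sqrt (H.inner f f)

/-- The Langevin Stein operator `(T_P g)(x) = ⟨g(x), b(x)⟩ + ∑_j ∂_{x_j} g_j(x)`, applied to a
function given by its components `g : Fin d → E d → ℝ`. -/
def TP {d : ℕ} (b : E d → E d) (g : Fin d → E d → ℝ) (x : E d) : ℝ :=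
  (∑ j, g j x * b x j) + ∑ j, fderiv ℝ (g j) x (esingle d j)

/-- The Langevin Stein operator applied to a vector field `g : ℝ^d → ℝ^d`. -/
def TPv {d : ℕ} (b : E d → E d) (g : E d → E d) (x : E d) : ℝ :=
  ⟪g x, b x⟫ + ∑ j, fderiv ℝ (fun z => g z j) x (esingle d j)

/-- The kernel Stein set `G_k` for the Euclidean (`ℓ²`) norm. -/
def SteinSet {d : ℕ} (H : RKHS' d) : Set (Fin d → E d → ℝ) :=
  {g | (∀ j, H.mem (g j)) ∧ (∑ j, (H.norm (g j)) ^ 2) ≤ 1}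

/-- The kernel Stein discrepancy `S(μ) = sup_{g ∈ G_k} |E_μ[(T_P g)(X)]|`. -/
def KSD {d : ℕ} (H : RKHS' d) (b : E d → E d) (μ : Measure (E d)) : ℝ :=
  ⨆ g : SteinSet H, |∫ x, TP b g.1 x ∂μ|

/-- The dual norm `‖v‖* = sup_{N(a) = 1} ⟨a, v⟩` of a norm `N` on `ℝ^d`. -/
def dualNorm {d : ℕ} (N : E d → ℝ) (v : E d) : ℝ :=
  sSup {s | ∃ a : E d, N a = 1 ∧ s = ⟪v, a⟫}

/-- `N` is a norm on `ℝ^d`. -/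
def IsNorm {d : ℕ} (N : E d → ℝ) : Prop :=
  (∀ x, 0 ≤ N x) ∧ (∀ x, N x = 0 ↔ x = 0) ∧
    (∀ x y, N (x + y) ≤ N x + N y) ∧ ∀ (c : ℝ) x, N (c • x) = |c| * N x

/-- The kernel Stein set `G_{k, ‖·‖}` for a general norm `N` on `ℝ^d`. -/
def SteinSetN {d : ℕ} (H : RKHS' d) (N : E d → ℝ) : Set (Fin d → E d → ℝ) :=
  {g | (∀ j, H.mem (g j)) ∧ dualNorm N (WithLp.toLp 2 (fun j => H.norm (g j))) ≤ 1}

/-- The kernel Stein discrepancy based on the Stein set `G_{k, ‖·‖}`. -/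
def KSDN {d : ℕ} (H : RKHS' d) (N : E d → ℝ) (b : E d → E d) (μ : Measure (E d)) : ℝ :=
  ⨆ g : SteinSetN H N, |∫ x, TP b g.1 x ∂μ|

/-- The Stein kernel
`k_0^j(x,y) = b_j(x)b_j(y)k(x,y) + b_j(x)∂_{y_j}k(x,y) + b_j(y)∂_{x_j}k(x,y) + ∂_{x_j}∂_{y_j}k(x,y)`. -/
def steinKernel {d : ℕ} (b : E d → E d) (k : E d → E d → ℝ) (j : Fin d) (x y : E d) : ℝ :=
  b x j * b y j * k x y + b x j * Dy j k x y + b y j * Dx j k x y + Dx j (Dy j k) x y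

/-- `k ∈ C^{(1,1)}`: `k` and all mixed partials `∂_{x_i}∂_{y_j} k` are continuous. -/
def C11 {d : ℕ} (k : E d → E d → ℝ) : Prop :=
  Continuous (fun q : E d × E d => k q.1 q.2) ∧
    ∀ i j : Fin d, Continuous fun q : E d × E d => Dx i (Dy j k) q.1 q.2

/-- `k ∈ C_b^{(1,1)}`: `k` and all mixed partials `∂_{x_i}∂_{y_j} k` are continuous and bounded. -/
def Cb11 {d : ℕ} (k : E d → E d → ℝ) : Prop :=
  C11 k ∧ (∃ C, ∀ x y, |k x y| ≤ C) ∧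
    ∀ i j : Fin d, ∃ C, ∀ x y, |Dx i (Dy j k) x y| ≤ C

/-- `k ∈ C_b^{(2,2)}`. -/
def Cb22 {d : ℕ} (k : E d → E d → ℝ) : Prop :=
  Cb11 k ∧ ∀ i₁ i₂ j₁ j₂ : Fin d,
    Continuous (fun q : E d × E d => Dx i₁ (Dx i₂ (Dy j₁ (Dy j₂ k))) q.1 q.2) ∧
      ∃ C, ∀ x y, |Dx i₁ (Dx i₂ (Dy j₁ (Dy j₂ k))) x y| ≤ C

/-- `k ∈ C_0^{(1,1)}`: `k` and all mixed partials are continuous and vanishing at infinity. -/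
def C011 {d : ℕ} (k : E d → E d → ℝ) : Prop :=
  C11 k ∧ Tendsto (fun q : E d × E d => k q.1 q.2) (cocompact _) (nhds 0) ∧
    ∀ i j : Fin d, Tendsto (fun q : E d × E d => Dx i (Dy j k) q.1 q.2) (cocompact _) (nhds 0)

/-- The score function `b = ∇ log p`. -/
def score {d : ℕ} (p : E d → ℝ) : E d → E d := fun x => gradient (fun z => Real.log (p z)) x

/-- `κ(r) = inf { -2⟨b(x)-b(y), x-y⟩/‖x-y‖² : ‖x-y‖ = r }`. -/
def kappaFn {d : ℕ} (b : E d → E d) (r : ℝ) : ℝ :=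
  sInf {s | ∃ x y : E d, ‖x - y‖ = r ∧ s = -2 * ⟪b x - b y, x - y⟫ / ‖x - y‖ ^ 2}

/-- Distant dissipativity: `κ_0 = liminf_{r → ∞} κ(r) > 0`. -/
def DistantlyDissipative {d : ℕ} (b : E d → E d) : Prop :=
  0 < liminf (fun r => kappaFn b r) atTop

/-- `f` is Lipschitz. -/
def LipschitzFn {d : ℕ} {α : Type*} [NormedAddCommGroup α] (f : E d → α) : Prop :=
  ∃ L : ℝ, 0 ≤ L ∧ ∀ x y, ‖f x - f y‖ ≤ L * ‖x - y‖

/-- Membership of a target (given by its score `b`) in the class `𝒫` of distantly dissipative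
distributions with Lipschitz score. -/
def InP {d : ℕ} (b : E d → E d) : Prop := DistantlyDissipative b ∧ LipschitzFn b

/-- Weak convergence of a sequence of measures to `P`. -/
def WeakConvTo {d : ℕ} (μ : ℕ → Measure (E d)) (P : Measure (E d)) : Prop :=
  ∀ f : BoundedContinuousFunction (E d) ℝ,
    Tendsto (fun m => ∫ x, f x ∂μ m) atTop (nhds (∫ x, f x ∂P))

/-- Uniform tightness of a sequence of measures. -/
def UnifTight {d : ℕ} (μ : ℕ → Measure (E d)) : Prop :=
  ∀ ε : ℝ, 0 < ε → ∃ R : ℝ, limsup (fun m => μ m {x | R < ‖x‖}) atTop ≤ ENNReal.ofReal ε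

/-- `M_0(f) = sup_x ‖f(x)‖`. -/
def M0 {d : ℕ} {α : Type*} [NormedAddCommGroup α] (f : E d → α) : ℝ :=
  sSup {s | ∃ x, s = ‖f x‖}

/-- `M_1(f) = sup_{x ≠ y} ‖f(x) - f(y)‖/‖x - y‖`. -/
def M1 {d : ℕ} {α : Type*} [NormedAddCommGroup α] (f : E d → α) : ℝ :=
  sSup {s | ∃ x y, x ≠ y ∧ s = ‖f x - f y‖ / ‖x - y‖}

/-- `M_2(g) = sup_{x ≠ y} ‖∇g(x) - ∇g(y)‖_op/‖x - y‖`. -/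
def M2 {d : ℕ} (g : E d → E d) : ℝ :=
  sSup {s | ∃ x y, x ≠ y ∧ s = ‖fderiv ℝ g x - fderiv ℝ g y‖ / ‖x - y‖}

/-- The L¹-Wasserstein distance, via couplings. -/
def Wass {d : ℕ} (μ ν : Measure (E d)) : ℝ :=
  sInf {s | ∃ Pi : Measure (E d × E d),
    Pi.map Prod.fst = μ ∧ Pi.map Prod.snd = ν ∧ s = ∫ q, ‖q.1 - q.2‖ ∂Pi}

/-- The bounded Lipschitz (Dudley) metric. -/
def dBL {d : ℕ} (μ ν : Measure (E d)) : ℝ :=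
  sSup {s | ∃ h : E d → ℝ, M0 h + M1 h ≤ 1 ∧ s = |(∫ x, h x ∂μ) - ∫ x, h x ∂ν|}

/-- The tightness rate `R(μ, ε) = inf { r ≥ 0 : μ(‖X‖ > r) ≤ ε }`. -/
def tightRate {d : ℕ} (μ : Measure (E d)) (ε : ℝ) : ℝ :=
  sInf {r | 0 ≤ r ∧ μ {x | r < ‖x‖} ≤ ENNReal.ofReal ε}

/-- `θ_d = d ∫_0^1 exp(-1/(1-r²)) r^{d-1} dr` for `d > 0`, and `θ_0 = e⁻¹`. -/
def theta (d : ℕ) : ℝ :=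
  if d = 0 then Real.exp (-1)
  else d * ∫ r in (0:ℝ)..1, Real.exp (-1 / (1 - r ^ 2)) * r ^ (d - 1)

/-- The volume of the unit Euclidean ball in `ℝ^d`. -/
def Vball (d : ℕ) : ℝ := (volume (Metric.ball (0 : E d) 1)).toReal

/-- `Φhat` is a generalized Fourier transform of `Φ` of order `m`: for every Schwartz test
function `γ` whose derivatives of order `< 2m` vanish at the origin,
`∫ Φ(x) γ̂(x) dx = ∫ Φhat(ω) γ(ω) dω`. -/
def IsGenFT {d : ℕ} (m : ℕ) (Φ Φhat : E d → ℝ) : Prop :=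
  ∀ γ : SchwartzMap (E d) ℂ, (∀ n : ℕ, n < 2 * m → iteratedFDeriv ℝ n (⇑γ) 0 = 0) →
    ∫ x, (Φ x : ℂ) * 𝓕 (⇑γ) x = ∫ ω, (Φhat ω : ℂ) * γ ω

/-- `F(t) = sup_{‖ω‖_∞ ≤ t} Φhat(ω)⁻¹`. -/
def Fsup {d : ℕ} (Φhat : E d → ℝ) (t : ℝ) : ℝ :=
  sSup {s | ∃ ω : E d, (∀ j, |ω j| ≤ t) ∧ s = (Φhat ω)⁻¹}

/-- The standard Gaussian density on `ℝ^d`. -/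
def gaussDensity (d : ℕ) : E d → ℝ := fun x => (2 * π) ^ (-(d : ℝ) / 2) * Real.exp (-‖x‖ ^ 2 / 2)

/-- The standard Gaussian measure `N(0, I_d)` on `ℝ^d`. -/
def stdGaussian (d : ℕ) : Measure (E d) :=
  volume.withDensity fun x => ENNReal.ofReal (gaussDensity d x)

/-- `‖∇_x k(x,y)‖₂`. -/
def gradX {d : ℕ} (k : E d → E d → ℝ) (x y : E d) : ℝ := Real.sqrt (∑ i, (Dx i k x y) ^ 2)

/-- `⟨∇_x, ∇_y k(x,y)⟩ = ∑_i ∂_{x_i}∂_{y_i} k(x,y)`. -/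
def mixedTrace {d : ℕ} (k : E d → E d → ℝ) (x y : E d) : ℝ := ∑ i, Dx i (Dy i k) x y

/-- Kernel decay rate
`γ(r) = sup { max(|k(x,y)|, ‖∇_x k(x,y)‖₂, |⟨∇_x, ∇_y k(x,y)⟩|) : ‖x-y‖₂ ≥ r }`. -/
def decayRate {d : ℕ} (k : E d → E d → ℝ) (r : ℝ) : ℝ :=
  sSup {s | ∃ x y : E d, r ≤ ‖x - y‖ ∧ s = max |k x y| (max (gradX k x y) |mixedTrace k x y|)}

/-- The Stein discrepancy over an arbitrary family `G` of vector fields. -/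
def SDisc {d : ℕ} (b : E d → E d) (G : Set (E d → E d)) (μ : Measure (E d)) : ℝ :=
  ⨆ g : G, |∫ x, TPv b g.1 x ∂μ|

/-! The tilt subtracts `φ(x) = x / (1 + ‖x‖²)` from the score. Since `φ` is Lipschitz, so is
`b̃ = b - φ`; since `‖φ‖ ≤ 1/2`, for `‖x - y‖ = r` the dissipativity quotient of `b̃` differs from
that of `b` by at most `2/r`, so `κ̃(r) ≥ κ(r) - 2/r` and the liminf stays positive.
Normalizability is immediate from `p̃ ≤ p`. -/

section Tilt

variable {F : Type*} [NormedAddCommGroup F] [NormedSpace ℝ F]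

lemma norm_inv_one_add_norm_sq_smul_le (x : F) : ‖(1 + ‖x‖ ^ 2)⁻¹ • x‖ ≤ 1 / 2 := by
  rw [norm_smul, norm_inv, Real.norm_of_nonneg (by positivity), inv_mul_le_iff₀ (by positivity)]
  nlinarith [sq_nonneg (‖x‖ - 1)]

lemma abs_inv_one_add_sq_sub_inv_one_add_sq_mul_le {u v : ℝ} (hu : 0 ≤ u) (hv : 0 ≤ v) :
    |(1 + u ^ 2)⁻¹ - (1 + v ^ 2)⁻¹| * v ≤ 2 * |u - v| := by
  have hquot : (1 + u ^ 2)⁻¹ - (1 + v ^ 2)⁻¹ = (v - u) * (u + v) / ((1 + u ^ 2) * (1 + v ^ 2)) := by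
    field_simp; ring
  rw [hquot, abs_div, abs_mul, abs_sub_comm, abs_of_nonneg (by positivity : 0 ≤ u + v),
    abs_of_pos (by positivity : 0 < (1 + u ^ 2) * (1 + v ^ 2)), div_mul_eq_mul_div,
    div_le_iff₀ (by positivity)]
  have : (u + v) * v ≤ 2 * ((1 + u ^ 2) * (1 + v ^ 2)) := by
    nlinarith [sq_nonneg (u - v), sq_nonneg (u * v), mul_nonneg hu hv]
  nlinarith [abs_nonneg (u - v)]

lemma lipschitzWith_inv_one_add_norm_sq_smul :
    LipschitzWith 3 (fun x : F => (1 + ‖x‖ ^ 2)⁻¹ • x) := by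
  refine lipschitzWith_iff_norm_sub_le.2 fun x y => ?_
  have hsplit : (1 + ‖x‖ ^ 2)⁻¹ • x - (1 + ‖y‖ ^ 2)⁻¹ • y
      = (1 + ‖x‖ ^ 2)⁻¹ • (x - y) + ((1 + ‖x‖ ^ 2)⁻¹ - (1 + ‖y‖ ^ 2)⁻¹) • y := by
    rw [smul_sub, sub_smul]; abel
  have hfirst : (1 + ‖x‖ ^ 2)⁻¹ * ‖x - y‖ ≤ ‖x - y‖ :=
    mul_le_of_le_one_left (norm_nonneg _) (inv_le_one_of_one_le₀ (by nlinarith [sq_nonneg ‖x‖]))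
  have hsecond := abs_inv_one_add_sq_sub_inv_one_add_sq_mul_le (norm_nonneg x) (norm_nonneg y)
  have hnorms := abs_norm_sub_norm_le x y
  calc _ ≤ (1 + ‖x‖ ^ 2)⁻¹ * ‖x - y‖ + |(1 + ‖x‖ ^ 2)⁻¹ - (1 + ‖y‖ ^ 2)⁻¹| * ‖y‖ := by
        rw [hsplit]
        refine (norm_add_le _ _).trans_eq ?_
        rw [norm_smul, norm_smul, norm_inv, Real.norm_of_nonneg (by positivity), Real.norm_eq_abs]
    _ ≤ (3 : NNReal) * ‖x - y‖ := by push_cast; linarith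

end Tilt

section Gradient

variable {F : Type*} [NormedAddCommGroup F] [InnerProductSpace ℝ F] [CompleteSpace F]

theorem HasGradientAt.sub {f g : F → ℝ} {f' g' x : F} (hf : HasGradientAt f f' x)
    (hg : HasGradientAt g g' x) : HasGradientAt (fun z => f z - g z) (f' - g') x := by
  rw [hasGradientAt_iff_hasFDerivAt] at *
  rw [map_sub]
  exact hf.sub hg

lemma hasGradientAt_log_sqrt_one_add_norm_sq (x : F) :
    HasGradientAt (fun z => log (sqrt (1 + ‖z‖ ^ 2))) ((1 + ‖x‖ ^ 2)⁻¹ • x) x := by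
  have hpos : ∀ z : F, 0 < 1 + ‖z‖ ^ 2 := fun z => by positivity
  have hfun : (fun z : F => log (sqrt (1 + ‖z‖ ^ 2))) = fun z => 2⁻¹ * log (1 + ‖z‖ ^ 2) := by
    funext z; rw [log_sqrt (hpos z).le]; ring
  have hderiv :=
    (((hasStrictFDerivAt_norm_sq x).hasFDerivAt.const_add 1).log (hpos x).ne').const_mul 2⁻¹
  rw [hfun, hasGradientAt_iff_hasFDerivAt]
  refine hderiv.congr_fderiv ?_
  ext w
  simp only [FunLike.coe_smul, Pi.smul_apply, innerSL_apply_apply,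
    InnerProductSpace.toDual_apply_apply, real_inner_smul_left, smul_eq_mul]
  ring

lemma gradient_log_div_sqrt_one_add_norm_sq {p : F → ℝ} (hp : ∀ z, p z ≠ 0) {x : F}
    (hpx : DifferentiableAt ℝ p x) :
    gradient (fun z => log (p z / sqrt (1 + ‖z‖ ^ 2))) x
      = gradient (fun z => log (p z)) x - (1 + ‖x‖ ^ 2)⁻¹ • x := by
  have hfun : (fun z => log (p z / sqrt (1 + ‖z‖ ^ 2)))
      = fun z => log (p z) - log (sqrt (1 + ‖z‖ ^ 2)) := by
    funext z; exact log_div (hp z) (sqrt_ne_zero'.2 (by positivity))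
  rw [hfun]
  exact ((hpx.log (hp x)).hasGradientAt.sub (hasGradientAt_log_sqrt_one_add_norm_sq x)).gradient

end Gradient

lemma hasFiniteIntegral_of_isFiniteMeasure_withDensity_ofReal {α : Type*} [MeasurableSpace α]
    {μ : Measure α} {f : α → ℝ} (hf : 0 ≤ᵐ[μ] f)
    [IsFiniteMeasure (μ.withDensity fun x => ENNReal.ofReal (f x))] : HasFiniteIntegral f μ := by
  rw [hasFiniteIntegral_iff_ofReal hf, ← setLIntegral_univ,
    ← withDensity_apply _ MeasurableSet.univ]
  exact measure_lt_top _ _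

theorem MeasureTheory.Integrable.div_sqrt_one_add_norm_sq {F : Type*} [NormedAddCommGroup F]
    [MeasurableSpace F] [OpensMeasurableSpace F] {μ : Measure F} {f : F → ℝ}
    (hf : Integrable f μ) : Integrable (fun x => f x / sqrt (1 + ‖x‖ ^ 2)) μ := by
  have hsqrt : Continuous fun x : F => sqrt (1 + ‖x‖ ^ 2) := by fun_prop
  refine hf.mono (hf.aestronglyMeasurable.div₀ hsqrt.aestronglyMeasurable) (ae_of_all _ fun x => ?_)
  rw [norm_div, Real.norm_of_nonneg (sqrt_nonneg _)]
  exact div_le_self (norm_nonneg _) (one_le_sqrt.2 (by nlinarith [sq_nonneg ‖x‖]))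

lemma lipschitzFn_iff_exists_lipschitzWith {d : ℕ} {α : Type*} [NormedAddCommGroup α]
    {f : E d → α} : LipschitzFn f ↔ ∃ K, LipschitzWith K f := by
  constructor
  · rintro ⟨L, hL, hf⟩
    exact ⟨⟨L, hL⟩, lipschitzWith_iff_norm_sub_le.2 hf⟩
  · rintro ⟨K, hf⟩
    exact ⟨K, K.2, hf.norm_sub_le⟩

section Dissipativity

variable {d : ℕ} {b g : E d → E d} {K K' : NNReal}

lemma abs_neg_two_mul_inner_div_le_of_lipschitzWith (hb : LipschitzWith K b) (x y : E d) :
    |-2 * ⟪b x - b y, x - y⟫ / ‖x - y‖ ^ 2| ≤ 2 * (K : ℝ) := by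
  have hinner : |⟪b x - b y, x - y⟫| ≤ K * ‖x - y‖ ^ 2 :=
    calc _ ≤ ‖b x - b y‖ * ‖x - y‖ := abs_real_inner_le_norm _ _
      _ ≤ K * ‖x - y‖ * ‖x - y‖ := by gcongr; exact hb.norm_sub_le x y
      _ = K * ‖x - y‖ ^ 2 := by ring
  rw [abs_div, abs_mul, abs_neg, abs_two, abs_of_nonneg (sq_nonneg ‖x - y‖)]
  rcases (sq_nonneg ‖x - y‖).eq_or_lt with h0 | hpos
  · rw [← h0, div_zero]; positivity
  · rw [div_le_iff₀ hpos]; linarith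

lemma kappaFn_le_of_norm_sub_eq (hb : LipschitzWith K b) {x y : E d} {r : ℝ} (h : ‖x - y‖ = r) :
    kappaFn b r ≤ -2 * ⟪b x - b y, x - y⟫ / ‖x - y‖ ^ 2 := by
  refine csInf_le ⟨-(2 * K), ?_⟩ ⟨x, y, h, rfl⟩
  rintro _ ⟨u, v, -, rfl⟩
  exact (abs_le.1 (abs_neg_two_mul_inner_div_le_of_lipschitzWith hb u v)).1

lemma kappaFn_eq_zero_of_not_exists_norm_sub_eq {r : ℝ} (hr : ¬∃ x y : E d, ‖x - y‖ = r)
    (b : E d → E d) : kappaFn b r = 0 := by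
  rw [kappaFn]
  convert Real.sInf_empty
  exact Set.eq_empty_iff_forall_notMem.2 fun _ ⟨x, y, hxy, _⟩ => hr ⟨x, y, hxy⟩

lemma abs_kappaFn_le (hb : LipschitzWith K b) (r : ℝ) : |kappaFn b r| ≤ 2 * (K : ℝ) := by
  by_cases hr : ∃ x y : E d, ‖x - y‖ = r
  · obtain ⟨x, y, hxy⟩ := hr
    refine abs_le.2 ⟨le_csInf ⟨_, x, y, hxy, rfl⟩ ?_, ?_⟩
    · rintro _ ⟨u, v, -, rfl⟩
      exact (abs_le.1 (abs_neg_two_mul_inner_div_le_of_lipschitzWith hb u v)).1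
    · exact (kappaFn_le_of_norm_sub_eq hb hxy).trans
        (abs_le.1 (abs_neg_two_mul_inner_div_le_of_lipschitzWith hb x y)).2
  · rw [kappaFn_eq_zero_of_not_exists_norm_sub_eq hr, abs_zero]; positivity

lemma kappaFn_sub_four_mul_div_le (hb : LipschitzWith K b) {B : ℝ} (hg : ∀ x, ‖g x‖ ≤ B)
    {r : ℝ} (hr : 0 < r) : kappaFn b r - 4 * B / r ≤ kappaFn (fun x => b x - g x) r := by
  by_cases hex : ∃ x y : E d, ‖x - y‖ = r
  · obtain ⟨x₀, y₀, h₀⟩ := hex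
    refine le_csInf ⟨_, x₀, y₀, h₀, rfl⟩ ?_
    rintro _ ⟨x, y, hxy, rfl⟩
    have hinner : -(2 * B * r) ≤ ⟪g x - g y, x - y⟫ := by
      refine neg_le_of_abs_le ((abs_real_inner_le_norm _ _).trans ?_)
      rw [hxy, two_mul]
      gcongr
      exact (norm_sub_le _ _).trans (add_le_add (hg x) (hg y))
    have hsplit : -2 * ⟪(b x - g x) - (b y - g y), x - y⟫ / ‖x - y‖ ^ 2
        = -2 * ⟪b x - b y, x - y⟫ / ‖x - y‖ ^ 2 + 2 * ⟪g x - g y, x - y⟫ / r ^ 2 := by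
      rw [show (b x - g x) - (b y - g y) = (b x - b y) - (g x - g y) by abel, inner_sub_left, hxy]
      ring
    have hpert : -(4 * B / r) ≤ 2 * ⟪g x - g y, x - y⟫ / r ^ 2 :=
      calc -(4 * B / r) = 2 * -(2 * B * r) / r ^ 2 := by field_simp; ring
        _ ≤ _ := by gcongr
    linarith [kappaFn_le_of_norm_sub_eq hb hxy]
  · have hB : 0 ≤ B := (norm_nonneg _).trans (hg 0)
    simp only [kappaFn_eq_zero_of_not_exists_norm_sub_eq hex]
    have : 0 ≤ 4 * B / r := by positivity
    linarith

theorem DistantlyDissipative.sub_of_norm_le (hdd : DistantlyDissipative b)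
    (hb : LipschitzWith K b) (hg : LipschitzWith K' g) {B : ℝ} (hgB : ∀ x, ‖g x‖ ≤ B) :
    DistantlyDissipative (fun x => b x - g x) := by
  set κ := liminf (kappaFn b) atTop
  have hκ : 0 < κ := hdd
  have hlarge : ∀ᶠ r in atTop, κ / 2 < kappaFn b r :=
    eventually_lt_of_lt_liminf (by linarith)
      (isBoundedUnder_of ⟨_, fun r => (abs_le.1 (abs_kappaFn_le hb r)).1⟩)
  have hsmall : ∀ᶠ r : ℝ in atTop, 4 * B / r < κ / 4 :=
    (tendsto_const_nhds.div_atTop tendsto_id).eventually (gt_mem_nhds (by linarith))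
  have hcobdd : IsCoboundedUnder (· ≥ ·) atTop (kappaFn fun x => b x - g x) :=
    (isBoundedUnder_of ⟨_, fun r => (abs_le.1 (abs_kappaFn_le (hb.sub hg) r)).2⟩)
      |>.isCoboundedUnder_ge
  refine (show 0 < κ / 4 by linarith).trans_le (le_liminf_of_le hcobdd ?_)
  filter_upwards [hlarge, hsmall, eventually_gt_atTop 0] with r hr₁ hr₂ hr
  linarith [kappaFn_sub_four_mul_div_le hb hgB hr]

end Dissipativity

/-- The tilted distribution remains in `𝒫`. If `P ∈ 𝒫` with density `p`,
then `p̃(x) ∝ p(x)/(1 + ‖x‖₂²)^{1/2}` is normalizable, its score is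
`b̃(x) = b(x) − x/(1 + ‖x‖₂²)`, `b̃` is Lipschitz, and `P̃` is distantly dissipative;
that is, `P̃ ∈ 𝒫`. -/
theorem tilted_distribution_in_P {d : ℕ}
    (p : E d → ℝ) (hp_pos : ∀ x, 0 < p x) (hp_C1 : ContDiff ℝ 1 p)
    (P : Measure (E d)) [IsProbabilityMeasure P]
    (hP : P = volume.withDensity fun x => ENNReal.ofReal (p x))
    (hPP : InP (score p)) :
    Integrable (fun x => p x / Real.sqrt (1 + ‖x‖ ^ 2)) volume ∧
      (0 < ∫ x, p x / Real.sqrt (1 + ‖x‖ ^ 2)) ∧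
      (∀ x, gradient (fun z => Real.log (p z / Real.sqrt (1 + ‖z‖ ^ 2))) x
          = score p x - (1 + ‖x‖ ^ 2)⁻¹ • x) ∧
      LipschitzFn (fun x => score p x - (1 + ‖x‖ ^ 2)⁻¹ • x) ∧
      DistantlyDissipative (fun x => score p x - (1 + ‖x‖ ^ 2)⁻¹ • x) := by
  obtain ⟨hdiss, hlip⟩ := hPP
  obtain ⟨K, hb⟩ := lipschitzFn_iff_exists_lipschitzWith.1 hlip
  have hp_int : Integrable p := by
    subst hP
    exact ⟨hp_C1.continuous.aestronglyMeasurable,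
      hasFiniteIntegral_of_isFiniteMeasure_withDensity_ofReal (ae_of_all _ fun x => (hp_pos x).le)⟩
  refine ⟨hp_int.div_sqrt_one_add_norm_sq, ?_, fun x => ?_,
    lipschitzFn_iff_exists_lipschitzWith.2 ⟨_, hb.sub lipschitzWith_inv_one_add_norm_sq_smul⟩,
    hdiss.sub_of_norm_le hb lipschitzWith_inv_one_add_norm_sq_smul norm_inv_one_add_norm_sq_smul_le⟩
  · exact integral_pos_of_integrable_nonneg_nonzero (x := 0)
      (hp_C1.continuous.div (by fun_prop) fun x => by positivity)
      hp_int.div_sqrt_one_add_norm_sq (fun x => div_nonneg (hp_pos x).le (sqrt_nonneg _))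
      (div_pos (hp_pos 0) (sqrt_pos.2 (by positivity))).ne'
  · exact gradient_log_div_sqrt_one_add_norm_sq (fun z => (hp_pos z).ne')
      ((hp_C1.differentiable one_ne_zero) x)
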